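/- arXiv:0910.3428 — 4 statements merged into one kernel-verified Lean document; each statement's English description precedes it below -/
import Mathlib

section
/- Let m > n ≥ 1 and ψ an approximating function. If ∑_{r=1}^∞ ψ(r)ⁿ r^{m-n-1} converges, then W₀(m,n;ψ) has mn-dimensional Lebesgue measure zero. -/
/-!
Write `|·|` for sup norms. If `q ≠ 0` and `|q_k| = |q|`, replacing row `k` of `X` by `qX` is a
linear map of determinant `q_kⁿ` which sends the `X` in the cube with `|qX| < δ` into a box of
volume `(2δ)ⁿ`; so these `X` have volume at most `(2δ/|q|)ⁿ`. Since at most `2m(2r+1)^(m-1)`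
integer vectors have `|q| = r`, the volumes for `δ = ψ(|q|)` sum to at most a multiple of
`∑ ψ(r)ⁿ r^(m-n-1) < ∞`, and Borel–Cantelli shows that the limsup of these sets, which contains
`W₀(m,n;ψ)`, is null.
-/
open MeasureTheory Filter
open scoped ENNReal

noncomputable def qnorm {m : ℕ} (q : Fin m → ℤ) : ℝ := ‖(fun i => (q i : ℝ) : Fin m → ℝ)‖

def cube (m n : ℕ) : Set (Fin m → Fin n → ℝ) :=
  {X | ∀ i j, X i j ∈ Set.Icc (-(1/2) : ℝ) (1/2)}

def W0 (m n : ℕ) (ψ : ℝ → ℝ) : Set (Fin m → Fin n → ℝ) :=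
  {X | X ∈ cube m n ∧
    {q : Fin m → ℤ | q ≠ 0 ∧
      ‖(fun j => ∑ i, (q i : ℝ) * X i j : Fin n → ℝ)‖ < ψ (qnorm q)}.Infinite}

noncomputable def Hf {α : Type*} [EMetricSpace α] [MeasurableSpace α] [BorelSpace α]
    (f : ℝ → ℝ) : Measure α :=
  Measure.mkMetric (fun d => ENNReal.ofReal (f d.toReal))

section
variable {ι κ R : Type*} [Fintype ι] [Fintype κ] [DecidableEq ι] [CommRing R]

theorem Matrix.det_mulLeftLinearMap (A : Matrix ι ι R) :
    LinearMap.det (mulLeftLinearMap κ R A) = A.det ^ Fintype.card κ := by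
  let e := transposeLinearEquiv ι κ R R ≪≫ₗ (ofLinearEquiv R).symm
  have : e.toLinearMap ∘ₗ mulLeftLinearMap κ R A ∘ₗ e.symm.toLinearMap =
      LinearMap.pi (fun j => (toLin' A).comp (LinearMap.proj j)) := by
    ext X j i
    simp [e, mul_apply, mulVec, dotProduct, mul_comm]
  rw [← LinearMap.det_conj _ e, this, LinearMap.det_pi, LinearMap.det_toLin', Finset.prod_const,
    Finset.card_univ]

theorem Matrix.det_one_updateRow (k : ι) (v : ι → R) :
    ((1 : Matrix ι ι R).updateRow k v).det = v k := by
  have hv : ∑ j, v j • (1 : Matrix ι ι R) j = v := by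
    ext i
    simp [one_apply]
  simpa [hv] using det_updateRow_sum (1 : Matrix ι ι R) k v
end

section
variable {ι κ : Type*} [Fintype ι] [Fintype κ] [DecidableEq ι]

theorem volume_setOf_abs_sum_mul_lt_le {q : ι → ℝ} {k : ι} (hk : q k ≠ 0) (δ : ℝ) :
    volume {X : ι → κ → ℝ | (∀ i j, X i j ∈ Set.Icc (-(1/2) : ℝ) (1/2)) ∧
        ∀ j, |∑ i, q i * X i j| < δ}
      ≤ ENNReal.ofReal (2 * δ / |q k|) ^ Fintype.card κ := by
  let L : (ι → κ → ℝ) →ₗ[ℝ] (ι → κ → ℝ) :=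
    mulLeftLinearMap κ ℝ ((1 : Matrix ι ι ℝ).updateRow k q)
  have hdet : LinearMap.det L = q k ^ Fintype.card κ :=
    (Matrix.det_mulLeftLinearMap _).trans (by rw [Matrix.det_one_updateRow])
  have hL (X : ι → κ → ℝ) (i : ι) (j : κ) :
      L X i j = ∑ i', (1 : Matrix ι ι ℝ).updateRow k q i i' * X i' j := rfl
  let box : Set (ι → κ → ℝ) := Set.univ.pi fun i => Set.univ.pi fun _ =>
    if i = k then Set.Ioo (-δ) δ else Set.Icc (-(1/2)) (1/2)
  have hsub : {X : ι → κ → ℝ | (∀ i j, X i j ∈ Set.Icc (-(1/2) : ℝ) (1/2)) ∧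
      ∀ j, |∑ i, q i * X i j| < δ} ⊆ L ⁻¹' box := by
    rintro X ⟨hcube, hslab⟩ i - j -
    by_cases hi : i = k
    · subst hi
      simpa [hL, box, abs_lt] using hslab j
    · simpa [hL, box, hi, Matrix.one_apply] using hcube i j
  have hside (i : ι) : volume (if i = k then Set.Ioo (-δ) δ else Set.Icc (-(1/2) : ℝ) (1/2)) =
      if i = k then ENNReal.ofReal (2 * δ) else 1 := by
    split_ifs <;> norm_num [Real.volume_Ioo, two_mul]
  have hbox : volume box = ENNReal.ofReal (2 * δ) ^ Fintype.card κ := by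
    simp only [box, volume_pi_pi, hside, Finset.prod_const, Finset.card_univ, ite_pow, one_pow,
      Finset.prod_ite_eq', Finset.mem_univ, if_true]
  calc volume _ ≤ volume (L ⁻¹' box) := measure_mono hsub
    _ = ENNReal.ofReal |(q k ^ Fintype.card κ)⁻¹| * ENNReal.ofReal (2 * δ) ^ Fintype.card κ := by
      rw [Measure.addHaar_preimage_linearMap _ (hdet ▸ pow_ne_zero _ hk), hdet, hbox]
    _ = ENNReal.ofReal |q k|⁻¹ ^ Fintype.card κ * ENNReal.ofReal (2 * δ) ^ Fintype.card κ := by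
      congr 1
      rw [abs_inv, abs_pow, ← inv_pow, ENNReal.ofReal_pow (by positivity)]
    _ = ENNReal.ofReal (2 * δ / |q k|) ^ Fintype.card κ := by
      rw [← mul_pow, mul_comm, ← ENNReal.ofReal_mul' (inv_nonneg.2 (abs_nonneg _)), div_eq_mul_inv]

theorem volume_setOf_norm_sum_mul_lt_le {q : ι → ℝ} (hq : q ≠ 0) (δ : ℝ) :
    volume {X : ι → κ → ℝ | (∀ i j, X i j ∈ Set.Icc (-(1/2) : ℝ) (1/2)) ∧
        ‖fun j => ∑ i, q i * X i j‖ < δ}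
      ≤ ENNReal.ofReal (2 * δ / ‖q‖) ^ Fintype.card κ := by
  obtain ⟨i, -⟩ := Function.ne_iff.1 hq
  have : Nonempty ι := ⟨i⟩
  obtain ⟨⟨k, hk : ‖q k‖ = ‖q‖⟩, -⟩ := IsGreatest.pi_norm q
  have hqk : q k ≠ 0 := by
    rw [← norm_ne_zero_iff, hk]
    exact norm_ne_zero_iff.2 hq
  rw [← hk, Real.norm_eq_abs]
  refine (measure_mono ?_).trans (volume_setOf_abs_sum_mul_lt_le hqk δ)
  rintro X ⟨hX, hlt⟩
  exact ⟨hX, fun j => by simpa using (norm_le_pi_norm _ j).trans_lt hlt⟩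
end

section
variable {ι : Type*} [Fintype ι]

def supNatAbs (q : ι → ℤ) : ℕ := Finset.univ.sup fun i => (q i).natAbs

theorem supNatAbs_le_iff {q : ι → ℤ} {r : ℕ} : supNatAbs q ≤ r ↔ ∀ i, (q i).natAbs ≤ r := by
  simp [supNatAbs]

theorem supNatAbs_eq_zero_iff {q : ι → ℤ} : supNatAbs q = 0 ↔ q = 0 := by
  rw [← Nat.le_zero, supNatAbs_le_iff]
  simp [funext_iff]

theorem mem_piFinset_Icc_iff_supNatAbs_le [DecidableEq ι] {q : ι → ℤ} {r : ℕ} :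
    q ∈ Fintype.piFinset (fun _ => Finset.Icc (-r : ℤ) r) ↔ supNatAbs q ≤ r := by
  simp only [Fintype.mem_piFinset, Finset.mem_Icc, supNatAbs_le_iff]
  exact forall_congr' fun i => by omega

theorem encard_supNatAbs_eq_succ_le (r : ℕ) :
    {q : ι → ℤ | supNatAbs q = r + 1}.encard ≤
      2 * Fintype.card ι * (2 * r + 3) ^ (Fintype.card ι - 1) := by
  classical
  let box (ρ : ℕ) := Fintype.piFinset fun _ : ι => Finset.Icc (-ρ : ℤ) ρ
  have hshell : {q : ι → ℤ | supNatAbs q = r + 1} = ↑(box (r + 1) \ box r) := by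
    ext q
    simp only [box, Set.mem_ofPred_eq, Finset.coe_sdiff, Set.mem_sdiff, Finset.mem_coe,
      mem_piFinset_Icc_iff_supNatAbs_le]
    omega
  have hsub : box r ⊆ box (r + 1) := fun q hq => by
    simp only [box, mem_piFinset_Icc_iff_supNatAbs_le] at hq ⊢
    omega
  rw [hshell, Set.encard_coe_eq_coe_finsetCard, Finset.card_sdiff_of_subset hsub]
  simp only [box, Fintype.card_piFinset, Int.card_Icc, Finset.prod_const, Finset.card_univ]
  norm_cast
  grind [abs_pow_sub_pow_le (α := ℤ) (2 * r + 3) (2 * r + 1) (Fintype.card ι)]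

theorem tsum_comp_supNatAbs_le (f : ℕ → ℝ≥0∞) :
    ∑' q : ι → ℤ, f (supNatAbs q) ≤
      f 0 + ∑' r : ℕ, ((2 * Fintype.card ι * (2 * r + 3) ^ (Fintype.card ι - 1) : ℕ) : ℝ≥0∞) *
        f (r + 1) := by
  have hfiber (r : ℕ) : ∑' q : (supNatAbs ⁻¹' {r} : Set (ι → ℤ)), f (supNatAbs q.1) =
      (supNatAbs ⁻¹' {r} : Set (ι → ℤ)).encard * f r := by
    rw [← ENNReal.tsum_set_const]
    exact tsum_congr fun q => congrArg f q.2
  have hzero : (supNatAbs ⁻¹' {0} : Set (ι → ℤ)) = {0} := by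
    ext q
    exact supNatAbs_eq_zero_iff
  rw [← ENNReal.tsum_fiberwise _ supNatAbs, tsum_eq_zero_add' ENNReal.summable]
  simp only [hfiber, hzero, Set.encard_singleton, ENat.toENNReal_one, one_mul]
  gcongr with r
  exact_mod_cast encard_supNatAbs_eq_succ_le r
end

theorem qnorm_eq_supNatAbs {m : ℕ} (q : Fin m → ℤ) : qnorm q = supNatAbs q := by
  rw [qnorm, Pi.norm_def, supNatAbs, ← NNReal.coe_natCast, Nat.cast_finsetSup]
  congr 2
  ext i
  simp

theorem shell_mul_pow_le (m n r : ℕ) {y : ℝ} (hy : 0 ≤ y) :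
    ((2 * m * (2 * r + 3) ^ (m - 1) : ℕ) : ℝ) * (2 * y / (r + 1)) ^ n ≤
      2 * m * 3 ^ (m - 1) * 2 ^ n * (y ^ n * ((r : ℝ) + 1) ^ (m - n - 1)) := by
  set ρ : ℝ := r + 1
  have hρ : 1 ≤ ρ := by simp [ρ]
  have hcount : ((2 * m * (2 * r + 3) ^ (m - 1) : ℕ) : ℝ) ≤ 2 * m * 3 ^ (m - 1) * ρ ^ (m - 1) := by
    rw [mul_assoc _ (3 ^ _ : ℝ), ← mul_pow]
    push_cast
    gcongr
    linarith
  have hpow : ρ ^ (m - 1) ≤ ρ ^ (m - n - 1) * ρ ^ n := by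
    rw [← pow_add]
    exact pow_le_pow_right₀ hρ (by omega)
  calc ((2 * m * (2 * r + 3) ^ (m - 1) : ℕ) : ℝ) * (2 * y / ρ) ^ n
      ≤ 2 * m * 3 ^ (m - 1) * ρ ^ (m - 1) * (2 * y / ρ) ^ n := by gcongr
    _ ≤ 2 * m * 3 ^ (m - 1) * (ρ ^ (m - n - 1) * ρ ^ n) * (2 * y / ρ) ^ n := by gcongr
    _ = 2 * m * 3 ^ (m - 1) * 2 ^ n * (y ^ n * ρ ^ (m - n - 1)) := by
      have hcancel : (2 * y / ρ) ^ n * ρ ^ n = 2 ^ n * y ^ n := by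
        rw [← mul_pow, div_mul_cancel₀ _ (by positivity), mul_pow]
      linear_combination (2 * m * 3 ^ (m - 1) * ρ ^ (m - n - 1)) * hcancel

def approxSet (m n : ℕ) (ψ : ℝ → ℝ) (q : Fin m → ℤ) : Set (Fin m → Fin n → ℝ) :=
  {X | X ∈ cube m n ∧ q ≠ 0 ∧ ‖(fun j => ∑ i, (q i : ℝ) * X i j : Fin n → ℝ)‖ < ψ (qnorm q)}

theorem W0_subset_limsup_approxSet (m n : ℕ) (ψ : ℝ → ℝ) :
    W0 m n ψ ⊆ limsup (approxSet m n ψ) cofinite := by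
  rintro X ⟨hX, hinf⟩
  rw [cofinite.limsup_set_eq]
  exact hinf.mono fun q hq => ⟨hX, hq⟩

theorem volume_approxSet_le (m n : ℕ) (ψ : ℝ → ℝ) (q : Fin m → ℤ) :
    volume (approxSet m n ψ q) ≤ ENNReal.ofReal (2 * ψ (supNatAbs q) / supNatAbs q) ^ n := by
  by_cases hq : q = 0
  · simp [approxSet, hq]
  have hq' : (fun i => (q i : ℝ)) ≠ 0 := fun h => hq (funext fun i => by simpa using congrFun h i)
  have hsub : approxSet m n ψ q ⊆ {X | (∀ i j, X i j ∈ Set.Icc (-(1/2) : ℝ) (1/2)) ∧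
      ‖fun j => ∑ i, (q i : ℝ) * X i j‖ < ψ (qnorm q)} := fun X hX => ⟨hX.1, hX.2.2⟩
  rw [← qnorm_eq_supNatAbs]
  calc volume (approxSet m n ψ q) ≤ _ := measure_mono hsub
    _ ≤ _ := volume_setOf_norm_sum_mul_lt_le hq' _
    _ = _ := by rw [Fintype.card_fin]; rfl

theorem tsum_shell_mul_ofReal_pow_ne_top (m n : ℕ) {ψ : ℝ → ℝ} (hψ : ∀ r : ℕ, 0 ≤ ψ (r + 1))
    (hsum : Summable (fun r : ℕ => ψ (r + 1) ^ n * ((r : ℝ) + 1) ^ (m - n - 1 : ℕ))) :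
    ∑' r : ℕ, ((2 * m * (2 * r + 3) ^ (m - 1) : ℕ) : ℝ≥0∞) *
      ENNReal.ofReal (2 * ψ ↑(r + 1) / ↑(r + 1)) ^ n ≠ ∞ := by
  set C : ℝ := 2 * m * 3 ^ (m - 1) * 2 ^ n
  have hterm (r : ℕ) : ((2 * m * (2 * r + 3) ^ (m - 1) : ℕ) : ℝ≥0∞) *
      ENNReal.ofReal (2 * ψ ↑(r + 1) / ↑(r + 1)) ^ n ≤
      ENNReal.ofReal (C * (ψ (r + 1) ^ n * ((r : ℝ) + 1) ^ (m - n - 1))) := by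
    have := hψ r
    rw [Nat.cast_add_one, ← ENNReal.ofReal_pow (by positivity), ← ENNReal.ofReal_natCast,
      ← ENNReal.ofReal_mul (by positivity)]
    exact ENNReal.ofReal_le_ofReal (shell_mul_pow_le m n r this)
  refine ne_top_of_le_ne_top ?_ (ENNReal.tsum_le_tsum hterm)
  rw [← ENNReal.ofReal_tsum_of_nonneg (fun r => by have := hψ r; positivity) (hsum.mul_left C)]
  exact ENNReal.ofReal_ne_top

theorem stmt2_general (m n : ℕ) (ψ : ℝ → ℝ)
    (hψpos : ∀ r > 0, 0 < ψ r)
    (hsum : Summable (fun r : ℕ => ψ (r + 1) ^ n * ((r : ℝ) + 1) ^ (m - n - 1 : ℕ))) :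
    volume (W0 m n ψ) = 0 := by
  let b : ℕ → ℝ≥0∞ := fun r => ENNReal.ofReal (2 * ψ r / r) ^ n
  have hvol : ∑' q, volume (approxSet m n ψ q) ≠ ∞ := by
    refine ne_top_of_le_ne_top ?_
      ((ENNReal.tsum_le_tsum (volume_approxSet_le m n ψ)).trans (tsum_comp_supNatAbs_le b))
    rw [Fintype.card_fin]
    exact ENNReal.add_ne_top.2 ⟨ENNReal.pow_ne_top ENNReal.ofReal_ne_top,
      tsum_shell_mul_ofReal_pow_ne_top m n (fun r => (hψpos _ (by positivity)).le) hsum⟩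
  exact measure_mono_null (W0_subset_limsup_approxSet m n ψ) (measure_limsup_cofinite_eq_zero hvol)

theorem stmt2 (m n : ℕ) (hn : 1 ≤ n) (hmn : n < m) (ψ : ℝ → ℝ)
    (hψ : AntitoneOn ψ (Set.Ioi 0)) (hψpos : ∀ r > 0, 0 < ψ r)
    (hψ0 : Tendsto ψ atTop (nhds 0))
    (hsum : Summable (fun r : ℕ => ψ (r + 1) ^ n * ((r : ℝ) + 1) ^ (m - n - 1 : ℕ))) :
    volume (W0 m n ψ) = 0 :=
  stmt2_general m n ψ hψpos hsum
end

section
/- Let m = n ≥ 2 and ψ an approximating function. If X ∈ [-1/2,1/2]^{m²}, viewed as an m×m real matrix, satisfies |qX|_∞ < ψ(|q|_∞) for infinitely many q ∈ ℤᵐ \ {0}, then det X = 0. -/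
/-!
If `det X ≠ 0`, the map `v ↦ v ᵥ* X` has a continuous inverse, so a small `|qX|_∞` forces
`|q|_∞ < 1`. Only finitely many integer vectors have bounded norm, so infinitely many solutions
`q` include some of large norm, where `ψ(|q|_∞)` and hence `|qX|_∞` are small; such a `q` would be
a nonzero integer vector of norm below `1`.
-/

open MeasureTheory Filter

open Matrix

lemma qnorm_eq_norm {m : ℕ} (q : Fin m → ℤ) : qnorm q = ‖q‖ := rfl

lemma finite_setOf_qnorm_le (m : ℕ) (R : ℝ) : {q : Fin m → ℤ | qnorm q ≤ R}.Finite := by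
  simpa [qnorm_eq_norm, Metric.closedBall] using
    (isCompact_closedBall (0 : Fin m → ℤ) R).finite_of_discrete

lemma one_le_qnorm {m : ℕ} {q : Fin m → ℤ} (hq : q ≠ 0) : 1 ≤ qnorm q := by
  obtain ⟨i, hi⟩ := Function.ne_iff.mp hq
  have h1 : (1 : ℝ) ≤ ‖q i‖ := by
    rw [Int.norm_eq_abs, ← Int.cast_abs]
    exact_mod_cast Int.one_le_abs hi
  exact qnorm_eq_norm q ▸ h1.trans (norm_le_pi_norm q i)

lemma Matrix.exists_pos_norm_lt_one_of_norm_vecMul_lt {𝕜 ι : Type*} [NormedField 𝕜]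
    [Fintype ι] [DecidableEq ι] {M : Matrix ι ι 𝕜} (hM : IsUnit M.det) :
    ∃ ε > 0, ∀ v : ι → 𝕜, ‖v ᵥ* M‖ < ε → ‖v‖ < 1 := by
  have hcont : ContinuousAt (fun w : ι → 𝕜 => w ᵥ* M⁻¹) 0 :=
    (continuous_id.matrix_vecMul continuous_const).continuousAt
  obtain ⟨ε, hε, h⟩ := Metric.continuousAt_iff.mp hcont 1 one_pos
  refine ⟨ε, hε, fun v hv => ?_⟩
  simpa [vecMul_vecMul, mul_nonsing_inv _ hM] using h (x := v ᵥ* M) (by simpa using hv)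

theorem stmt6_general (m : ℕ) (ψ : ℝ → ℝ)
    (hψ0 : Tendsto ψ atTop (nhds 0))
    (X : Fin m → Fin m → ℝ) (hX : X ∈ W0 m m ψ) :
    Matrix.det (Matrix.of X) = 0 := by
  by_contra hdet
  obtain ⟨ε, hε, hsmall⟩ :=
    exists_pos_norm_lt_one_of_norm_vecMul_lt (isUnit_iff_ne_zero.mpr hdet)
  obtain ⟨R, hR⟩ := eventually_atTop.mp (hψ0.eventually_lt_const hε)
  obtain ⟨q, ⟨hq0, hqX⟩, hqR⟩ := (hX.2.sdiff (finite_setOf_qnorm_le m R)).nonempty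
  have hqX_small : ‖(fun i => (q i : ℝ)) ᵥ* Matrix.of X‖ < ε :=
    hqX.trans (hR _ (not_le.mp hqR).le)
  exact (one_le_qnorm hq0).not_gt (hsmall _ hqX_small)

theorem stmt6 (m : ℕ) (hm : 2 ≤ m) (ψ : ℝ → ℝ)
    (hψ : AntitoneOn ψ (Set.Ioi 0)) (hψpos : ∀ r > 0, 0 < ψ r)
    (hψ0 : Tendsto ψ atTop (nhds 0))
    (X : Fin m → Fin m → ℝ) (hX : X ∈ W0 m m ψ) :
    Matrix.det (Matrix.of X) = 0 :=
  stmt6_general m ψ hψ0 X hX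
end

section
/- Let m ≤ n and ψ an approximating function. Then the Hausdorff dimension of W₀(m,n;ψ) is at most (m−1)(n+1). -/
open MeasureTheory Filter

/-- The parametrization of matrices whose `i`-th row is a linear combination of the others. -/
noncomputable def rowComb (m' n : ℕ) (i : Fin (m' + 1)) :
    ((Fin m' → ℝ) × (Fin m' → Fin n → ℝ)) → (Fin (m' + 1) → Fin n → ℝ) :=
  fun p => i.insertNth (fun j => ∑ k, p.1 k * p.2 k j) p.2

lemma rowComb_contDiff (m' n : ℕ) (i : Fin (m' + 1)) :
    ContDiff ℝ 1 (rowComb m' n i) := by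
  rw [contDiff_pi]
  intro i'
  rcases eq_or_ne i' i with rfl | hne
  · simp only [rowComb, Fin.insertNth_apply_same]
    rw [contDiff_pi]
    intro j
    apply ContDiff.sum
    intro k _
    have h1 : ContDiff ℝ 1 (fun p : (Fin m' → ℝ) × (Fin m' → Fin n → ℝ) => p.1 k) :=
      (contDiff_pi.mp contDiff_id k).comp contDiff_fst
    have h2 : ContDiff ℝ 1 (fun p : (Fin m' → ℝ) × (Fin m' → Fin n → ℝ) => p.2 k j) :=
      contDiff_pi.mp ((contDiff_pi.mp contDiff_id k).comp contDiff_snd) j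
    exact h1.mul h2
  · obtain ⟨k, rfl⟩ := Fin.exists_succAbove_eq hne
    simp only [rowComb, Fin.insertNth_apply_succAbove]
    exact (contDiff_pi.mp contDiff_id k).comp contDiff_snd

theorem stmt8 (m n : ℕ) (hm : 2 ≤ m) (hmn : m ≤ n) (ψ : ℝ → ℝ)
    (hψ : AntitoneOn ψ (Set.Ioi 0)) (hψpos : ∀ r > 0, 0 < ψ r)
    (hψ0 : Tendsto ψ atTop (nhds 0)) :
    dimH (W0 m n ψ) ≤ ((m - 1) * (n + 1) : ℕ) := by
  obtain ⟨m', rfl⟩ : ∃ m', m = m' + 1 := ⟨m - 1, by omega⟩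
  set S : Set (Fin (m' + 1) → Fin n → ℝ) :=
    {X | ∃ u : Fin (m' + 1) → ℝ, u ≠ 0 ∧ ∀ j, ∑ i, u i * X i j = 0} with hSdef
  -- Step 1 : W0 ⊆ S
  have hsub : W0 (m' + 1) n ψ ⊆ S := by
    intro X hX
    by_contra hc
    -- the rows of X are linearly independent, so v ↦ vX is injective and antilipschitz
    have hker : ∀ u : Fin (m' + 1) → ℝ, (∀ j, ∑ i, u i * X i j = 0) → u = 0 := by
      intro u hu
      by_contra h0
      exact hc ⟨u, h0, hu⟩
    let L : (Fin (m' + 1) → ℝ) →ₗ[ℝ] (Fin n → ℝ) :=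
      { toFun := fun u j => ∑ i, u i * X i j
        map_add' := by
          intro u v; funext j
          simp [add_mul, Finset.sum_add_distrib]
        map_smul' := by
          intro c u; funext j
          simp [Finset.mul_sum, mul_assoc] }
    have hLker : LinearMap.ker L = ⊥ := by
      rw [LinearMap.ker_eq_bot']
      intro u hu
      exact hker u fun j => congrFun hu j
    obtain ⟨K, hK0, hAL⟩ := L.exists_antilipschitzWith hLker
    set B : ℝ := K * ψ 1 with hB
    -- every q in the defining set has all coordinates bounded by ⌈B⌉
    have hbd : {q : Fin (m' + 1) → ℤ | q ≠ 0 ∧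
        ‖(fun j => ∑ i, (q i : ℝ) * X i j : Fin n → ℝ)‖ < ψ (qnorm q)} ⊆
        Set.pi Set.univ (fun _ : Fin (m' + 1) => Set.Icc (-⌈B⌉) ⌈B⌉) := by
      intro q hq
      obtain ⟨hq0, hqlt⟩ := hq
      set v : Fin (m' + 1) → ℝ := fun i => (q i : ℝ) with hv
      have h1q : (1 : ℝ) ≤ qnorm q := by
        obtain ⟨i, hi⟩ := Function.ne_iff.mp hq0
        have : (1 : ℝ) ≤ |(q i : ℝ)| := by
          rw [← Int.cast_abs]
          exact_mod_cast Int.one_le_abs hi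
        calc (1 : ℝ) ≤ |(q i : ℝ)| := this
          _ = ‖v i‖ := by simp [hv]
          _ ≤ ‖v‖ := norm_le_pi_norm v i
      have hψle : ψ (qnorm q) ≤ ψ 1 := by
        refine hψ (by norm_num) ?_ h1q
        exact Set.mem_Ioi.mpr (lt_of_lt_of_le one_pos h1q)
      have hnormv : ‖v‖ ≤ B := by
        have h0 : ‖v‖ ≤ K * ‖L v‖ := by
          have := hAL.le_mul_dist v 0
          simpa [dist_eq_norm, map_zero] using this
        have h1 : ‖L v‖ < ψ (qnorm q) := hqlt
        calc ‖v‖ ≤ K * ‖L v‖ := h0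
          _ ≤ K * ψ (qnorm q) := by
            exact mul_le_mul_of_nonneg_left h1.le (by positivity)
          _ ≤ K * ψ 1 := mul_le_mul_of_nonneg_left hψle (by positivity)
      intro i _
      have habs : |(q i : ℝ)| ≤ B := by
        calc |(q i : ℝ)| = ‖v i‖ := by simp [hv]
          _ ≤ ‖v‖ := norm_le_pi_norm v i
          _ ≤ B := hnormv
      have : |q i| ≤ ⌈B⌉ := by
        have : (|q i| : ℝ) ≤ (⌈B⌉ : ℝ) := by
          calc (|q i| : ℝ) = |(q i : ℝ)| := by push_cast; ring
            _ ≤ B := habs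
            _ ≤ (⌈B⌉ : ℝ) := Int.le_ceil B
        exact_mod_cast this
      exact Set.mem_Icc.mpr (abs_le.mp this)
    have hfin : {q : Fin (m' + 1) → ℤ | q ≠ 0 ∧
        ‖(fun j => ∑ i, (q i : ℝ) * X i j : Fin n → ℝ)‖ < ψ (qnorm q)}.Finite :=
      Set.Finite.subset (Set.Finite.pi fun _ => Set.finite_Icc _ _) hbd
    exact hX.2 hfin
  -- Step 2 : S is covered by ranges of the `rowComb` maps
  have hcover : S ⊆ ⋃ i : Fin (m' + 1), Set.range (rowComb m' n i) := by
    rintro X ⟨u, hu0, hu⟩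
    obtain ⟨i, hi⟩ := Function.ne_iff.mp hu0
    simp only [Pi.zero_apply] at hi
    refine Set.mem_iUnion.mpr ⟨i,
      ⟨(fun k => -(u (i.succAbove k)) / u i, fun k => X (i.succAbove k)), ?_⟩⟩
    funext i'
    rcases eq_or_ne i' i with rfl | hne
    · rw [rowComb, Fin.insertNth_apply_same]
      funext j
      have h0 := hu j
      rw [Fin.sum_univ_succAbove _ i'] at h0
      have hsum : ∑ k, (-(u (i'.succAbove k)) / u i') * X (i'.succAbove k) j
          = (-(1 / u i')) * ∑ k, u (i'.succAbove k) * X (i'.succAbove k) j := by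
        rw [Finset.mul_sum]
        exact Finset.sum_congr rfl fun k _ => by ring
      have h2 : ∑ k, u (i'.succAbove k) * X (i'.succAbove k) j = -(u i' * X i' j) := by
        linarith
      show ∑ k, (-(u (i'.succAbove k)) / u i') * X (i'.succAbove k) j = X i' j
      rw [hsum, h2]
      field_simp
    · obtain ⟨k, rfl⟩ := Fin.exists_succAbove_eq hne
      rw [rowComb, Fin.insertNth_apply_succAbove]
  -- Step 3 : dimension count
  have hrank : ∀ i : Fin (m' + 1),
      dimH (Set.range (rowComb m' n i)) ≤ ((m' * (n + 1) : ℕ) : ENNReal) := by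
    intro i
    refine le_trans (rowComb_contDiff m' n i).dimH_range_le ?_
    have : Module.finrank ℝ ((Fin m' → ℝ) × (Fin m' → Fin n → ℝ)) = m' * (n + 1) := by
      simp [Module.finrank_prod, Module.finrank_pi, Module.finrank_pi_fintype]
      ring
    rw [this]
  calc dimH (W0 (m' + 1) n ψ) ≤ dimH (⋃ i : Fin (m' + 1), Set.range (rowComb m' n i)) :=
        dimH_mono (hsub.trans hcover)
    _ = ⨆ i : Fin (m' + 1), dimH (Set.range (rowComb m' n i)) := dimH_iUnion _
    _ ≤ ((m' * (n + 1) : ℕ) : ENNReal) := iSup_le hrank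
    _ = (((m' + 1 - 1) * (n + 1) : ℕ) : ENNReal) := by norm_num
end

section
/- Let m > n, fix t ∈ ℕ, and let X ∈ [-1/2,1/2]^{mn} be a matrix at distance at least 2^{-t} from the boundary of the cube, such that every nonzero q ∈ ℤᵐ with |qX|_∞ < m(2ᵗ)^{-m/n+1} satisfies |q|_∞ ≥ 2ᵗ/ω(t). Then there exists a nonzero q ∈ ℤᵐ with 2ᵗ/ω(t) ≤ |q|_∞ ≤ 2ᵗ and a matrix U with qU = 0 such that |X − U|_∞ ≤ m (2ᵗ)^{-m/n} ω(t). -/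
open MeasureTheory Filter

/-! Dirichlet's pigeonhole argument produces a nonzero `q` with `|q|_∞ ≤ 2ᵗ` and
`|qX|_∞ < m (2ᵗ)^{1-m/n}`, so the hypothesis on `X` forces `|q|_∞ ≥ 2ᵗ/ω(t)`. Moving the row of `X`
at a maximal coordinate `i` of `q` by `-(q·x^{(j)})/q_i` in column `j` lands on `qU = 0` at
sup-distance at most `|qX|_∞/|q|_∞ ≤ m (2ᵗ)^{-m/n} ω(t)`. -/

open Finset

lemma rpow_add_one_lt_add_one_rpow {x a : ℝ} (hx : 1 ≤ x) (ha : 1 < a) :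
    x ^ a + 1 < (x + 1) ^ a := by
  have hx0 : 0 < x := one_pos.trans_le hx
  have hsplit : ∀ y : ℝ, 0 < y → y ^ a = y * y ^ (a - 1) := fun y hy => by
    rw [← Real.rpow_one_add' hy.le (by linarith)]
    ring_nf
  have hmono : x ^ (a - 1) < (x + 1) ^ (a - 1) :=
    Real.rpow_lt_rpow hx0.le (by linarith) (by linarith)
  have hone : 1 ≤ x ^ (a - 1) := Real.one_le_rpow hx (by linarith)
  rw [hsplit x hx0, hsplit (x + 1) (by linarith)]
  nlinarith

lemma rpow_div_add_one_pow_lt {x : ℝ} (hx : 1 ≤ x) {m n : ℕ} (hn : 1 ≤ n) (hmn : n < m) :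
    (x ^ ((m : ℝ) / n) + 1) ^ n < (x + 1) ^ m := by
  have hn0 : (0 : ℝ) < n := by exact_mod_cast hn
  have ha : 1 < (m : ℝ) / n := (one_lt_div hn0).2 (by exact_mod_cast hmn)
  calc (x ^ ((m : ℝ) / n) + 1) ^ n < ((x + 1) ^ ((m : ℝ) / n)) ^ n :=
        pow_lt_pow_left₀ (rpow_add_one_lt_add_one_rpow hx ha) (by positivity) (by omega)
    _ = (x + 1) ^ m := by
        rw [← Real.rpow_mul_natCast (by linarith), div_mul_cancel₀ _ hn0.ne', Real.rpow_natCast]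

lemma exists_ne_forall_abs_sub_lt {ι κ : Type*} [Fintype ι] [Fintype κ] (f : ι → κ → ℝ)
    {L ε : ℝ} (hL : 0 ≤ L) (hε : 0 < ε) (hf : ∀ a k, f a k ∈ Set.Icc 0 L)
    (hcard : (L / ε + 1) ^ Fintype.card κ < Fintype.card ι) :
    ∃ a b, a ≠ b ∧ ∀ k, |f a k - f b k| < ε := by
  classical
  set N := ⌊L / ε⌋₊
  let box : ι → κ → Fin (N + 1) := fun a k =>
    ⟨⌊f a k / ε⌋₊, Nat.lt_succ_of_le <|
      Nat.floor_le_floor (div_le_div_of_nonneg_right (hf a k).2 hε.le)⟩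
  have hboxes : Fintype.card (κ → Fin (N + 1)) < Fintype.card ι := by
    have hN : (N : ℝ) ≤ L / ε := Nat.floor_le (by positivity)
    have : ((N + 1 : ℕ) : ℝ) ^ Fintype.card κ < Fintype.card ι :=
      (pow_le_pow_left₀ (by positivity) (by push_cast; linarith) _).trans_lt hcard
    simpa only [Fintype.card_fun, Fintype.card_fin] using (by exact_mod_cast this :
      (N + 1) ^ Fintype.card κ < Fintype.card ι)
  obtain ⟨a, b, hab, hbox⟩ := Fintype.exists_ne_map_eq_of_card_lt box hboxes
  refine ⟨a, b, hab, fun k => ?_⟩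
  have hfloor : ⌊f a k / ε⌋ = ⌊f b k / ε⌋ := by
    have h := congrArg Fin.val (congrFun hbox k)
    rw [← Int.natCast_floor_eq_floor (div_nonneg (hf a k).1 hε.le),
      ← Int.natCast_floor_eq_floor (div_nonneg (hf b k).1 hε.le)]
    exact_mod_cast h
  have := Int.abs_sub_lt_one_of_floor_eq_floor hfloor
  rwa [← sub_div, abs_div, abs_of_pos hε, div_lt_one hε] at this

lemma abs_sum_natCast_mul_le {m : ℕ} {κ : Type*} (X : Fin m → κ → ℝ)
    (hX : ∀ i k, |X i k| ≤ 1 / 2) {Q : ℕ} (p : Fin m → Fin (Q + 1)) (k : κ) :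
    |∑ i, ((p i : ℕ) : ℝ) * X i k| ≤ m * Q / 2 := by
  calc |∑ i, ((p i : ℕ) : ℝ) * X i k| ≤ ∑ i, ((p i : ℕ) : ℝ) * |X i k| := by
        refine (abs_sum_le_sum_abs _ _).trans_eq ?_
        simp only [abs_mul, Nat.abs_cast]
    _ ≤ ∑ _i : Fin m, (Q : ℝ) * (1 / 2) := by
        gcongr with i
        · exact_mod_cast Fin.is_le (p i)
        · exact hX i k
    _ = m * Q / 2 := by simp only [sum_const, card_univ, Fintype.card_fin, nsmul_eq_mul]; ring

/-- Dirichlet's theorem for a system of linear forms with coefficients in `[-1/2, 1/2]`. -/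
lemma exists_ne_zero_abs_sum_mul_lt {m : ℕ} {κ : Type*} [Fintype κ] (X : Fin m → κ → ℝ)
    (hX : ∀ i k, |X i k| ≤ 1 / 2) (Q : ℕ) {ε : ℝ} (hε : 0 < ε)
    (hcard : (m * Q / ε + 1) ^ Fintype.card κ < (Q + 1) ^ m) :
    ∃ q : Fin m → ℤ, q ≠ 0 ∧ (∀ i, |q i| ≤ Q) ∧ ∀ k, |∑ i, (q i : ℝ) * X i k| < ε := by
  let f : (Fin m → Fin (Q + 1)) → κ → ℝ := fun p k => ∑ i, ((p i : ℕ) : ℝ) * X i k + m * Q / 2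
  have hf : ∀ p k, f p k ∈ Set.Icc (0 : ℝ) (m * Q) := fun p k => by
    have := abs_le.1 (abs_sum_natCast_mul_le X hX p k)
    constructor <;> simp only [f] <;> linarith
  obtain ⟨p, p', hpp', hclose⟩ := exists_ne_forall_abs_sub_lt f (by positivity) hε hf
    (by simpa only [Fintype.card_fun, Fintype.card_fin] using (by exact_mod_cast hcard :
      (m * Q / ε + 1) ^ Fintype.card κ < (((Q + 1) ^ m : ℕ) : ℝ)))
  refine ⟨fun i => (p i : ℤ) - p' i, fun h => hpp' (funext fun i => Fin.ext ?_), fun i => ?_,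
    fun k => ?_⟩
  · simpa [sub_eq_zero] using congrFun h i
  · have := Fin.is_le (p i); have := Fin.is_le (p' i)
    dsimp only
    rw [abs_le]; constructor <;> omega
  · convert hclose k using 2
    simp only [f, Int.cast_sub, Int.cast_natCast, sub_mul, sum_sub_distrib]
    ring

lemma exists_sum_mul_eq_zero_abs_sub_le {ι κ : Type*} [Fintype ι] [DecidableEq ι]
    (q : ι → ℝ) (hq : q ≠ 0) (X : ι → κ → ℝ) :
    ∃ U : ι → κ → ℝ, (∀ k, ∑ i, q i * U i k = 0) ∧
      ∀ i k, |X i k - U i k| ≤ |∑ i, q i * X i k| / ‖q‖ := by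
  obtain ⟨i, -⟩ := Function.ne_iff.1 hq
  have : Nonempty ι := ⟨i⟩
  obtain ⟨i₀, hi₀⟩ := Finite.exists_max fun i => ‖q i‖
  have hnorm : ‖q‖ = |q i₀| :=
    le_antisymm ((pi_norm_le_iff_of_nonneg (norm_nonneg _)).2 hi₀) (norm_le_pi_norm q i₀)
  have hqi₀ : q i₀ ≠ 0 := by rw [← abs_pos, ← hnorm]; exact norm_pos_iff.2 hq
  refine ⟨fun i k => X i k - if i = i₀ then (∑ i, q i * X i k) / q i₀ else 0,
    fun k => ?_, fun i k => ?_⟩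
  · simp only [mul_sub, sum_sub_distrib, mul_ite, mul_zero, sum_ite_eq', mem_univ, if_true,
      mul_div_cancel₀ _ hqi₀, sub_self]
  · rw [sub_sub_cancel, hnorm]
    split_ifs
    · rw [abs_div]
    · rw [abs_zero]; positivity

lemma qnorm_le_of_forall_abs_le {m : ℕ} {q : Fin m → ℤ} {Q : ℕ} (h : ∀ i, |q i| ≤ Q) :
    qnorm q ≤ Q :=
  (pi_norm_le_iff_of_nonneg (Nat.cast_nonneg Q)).2 fun i => by
    simpa only [Real.norm_eq_abs, ← Int.cast_abs] using
      (by exact_mod_cast h i : ((|q i| : ℤ) : ℝ) ≤ Q)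

theorem stmt14_general (m n : ℕ) (hn : 1 ≤ n) (hmn : n < m) (t : ℕ) (ω : ℕ → ℝ)
    (hωpos : ∀ s, 0 < ω s)
    (X : Fin m → Fin n → ℝ)
    (hXbd : ∀ i j, |X i j| ≤ 1 / 2 - (2 : ℝ) ^ (-(t : ℤ)))
    (hXlarge : ∀ q : Fin m → ℤ, q ≠ 0 →
      ‖(fun j => ∑ i, (q i : ℝ) * X i j : Fin n → ℝ)‖ <
          m * ((2 : ℝ) ^ t) ^ (-(m : ℝ) / n + 1) →
        2 ^ t / ω t ≤ qnorm q) :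
    ∃ q : Fin m → ℤ, q ≠ 0 ∧ 2 ^ t / ω t ≤ qnorm q ∧ qnorm q ≤ 2 ^ t ∧
      ∃ U : Fin m → Fin n → ℝ, (∀ j, ∑ i, (q i : ℝ) * U i j = 0) ∧
        ∀ i j, |X i j - U i j| ≤ m * ((2 : ℝ) ^ t) ^ (-(m : ℝ) / n) * ω t := by
  set P : ℝ := 2 ^ t
  have hP : 1 ≤ P := one_le_pow₀ (by norm_num)
  have hm : (0 : ℝ) < m := by norm_cast; omega
  set ε : ℝ := m * P ^ (-(m : ℝ) / n + 1)
  have hε_eq : ε = m * P ^ (-(m : ℝ) / n) * P := by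
    simp only [ε]
    rw [Real.rpow_add_one (by positivity)]; ring
  have hε : 0 < ε := by positivity
  have hcard : ((m : ℝ) * P / ε + 1) ^ n < (P + 1) ^ m := by
    have hPε : (m : ℝ) * P / ε = P ^ ((m : ℝ) / n) := by
      rw [hε_eq, neg_div, Real.rpow_neg (by positivity)]
      field_simp
    rw [hPε]
    exact rpow_div_add_one_pow_lt hP hn hmn
  obtain ⟨q, hq0, hqP, hqX⟩ := exists_ne_zero_abs_sum_mul_lt X
    (fun i j => (hXbd i j).trans (sub_le_self _ (by positivity))) (2 ^ t) hε
    (by simpa only [Fintype.card_fin, Nat.cast_pow, Nat.cast_ofNat] using hcard)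
  have hq_le : qnorm q ≤ P := by simpa using qnorm_le_of_forall_abs_le hqP
  have hq_ge : P / ω t ≤ qnorm q := hXlarge q hq0 <| (pi_norm_lt_iff hε).2 fun j => by
    simpa only [Real.norm_eq_abs] using hqX j
  have hq_pos : 0 < qnorm q := (div_pos (by positivity) (hωpos t)).trans_le hq_ge
  obtain ⟨U, hU, hXU⟩ := exists_sum_mul_eq_zero_abs_sub_le (fun i => (q i : ℝ))
    (fun h => hq_pos.ne' (by simp only [qnorm, h, norm_zero])) X
  refine ⟨q, hq0, hq_ge, hq_le, U, hU, fun i j => (hXU i j).trans ?_⟩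
  calc |∑ i, (q i : ℝ) * X i j| / qnorm q ≤ ε / (P / ω t) :=
        div_le_div₀ hε.le (hqX j).le (div_pos (by positivity) (hωpos t)) hq_ge
    _ = m * P ^ (-(m : ℝ) / n) * ω t := by
        rw [hε_eq]; field_simp [(hωpos t).ne']

theorem stmt14 (m n : ℕ) (hn : 1 ≤ n) (hmn : n < m) (t : ℕ) (ω : ℕ → ℝ)
    (hω : Monotone ω) (hωpos : ∀ s, 0 < ω s) (hωtop : Tendsto ω atTop atTop)
    (X : Fin m → Fin n → ℝ)
    (hXbd : ∀ i j, |X i j| ≤ 1 / 2 - (2 : ℝ) ^ (-(t : ℤ)))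
    (hXlarge : ∀ q : Fin m → ℤ, q ≠ 0 →
      ‖(fun j => ∑ i, (q i : ℝ) * X i j : Fin n → ℝ)‖ <
          m * ((2 : ℝ) ^ t) ^ (-(m : ℝ) / n + 1) →
        2 ^ t / ω t ≤ qnorm q) :
    ∃ q : Fin m → ℤ, q ≠ 0 ∧ 2 ^ t / ω t ≤ qnorm q ∧ qnorm q ≤ 2 ^ t ∧
      ∃ U : Fin m → Fin n → ℝ, (∀ j, ∑ i, (q i : ℝ) * U i j = 0) ∧
        ∀ i j, |X i j - U i j| ≤ m * ((2 : ℝ) ^ t) ^ (-(m : ℝ) / n) * ω t :=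
  stmt14_general m n hn hmn t ω hωpos X hXbd hXlarge
end
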